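/- Characterization of final states: if s is a reachable Set EXAM state to which no transition applies, then there is a β-normal form f such that s = (f, ∅, E) for some environment E (the pool is empty and the approximant has no named holes) and ⟦s⟧ = f; moreover, if s ≡ s' then s' is also final and ⟦s'⟧ = f. -/

import Mathlib

set_option maxHeartbeats 1000000

/-- λ-terms extended with named holes (named multi-contexts).
    A pure λ-term is a `Tm` satisfying `Tm.NoHole`. -/
inductive Tm where
  | var : ℕ → Tm
  | lam : ℕ → Tm → Tm
  | app : Tm → Tm → Tm
  | hole : ℕ → Tm
deriving DecidableEq

namespace Tm

def size : Tm → ℕ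
  | var _ => 1
  | hole _ => 1
  | lam _ t => t.size + 1
  | app t u => t.size + u.size + 1

/-- Renaming of the free variable `y` to `z` (intended for fresh `z`). -/
def rename (y z : ℕ) : Tm → Tm
  | var w => if w = y then var z else var w
  | hole a => hole a
  | lam w t => if w = y then lam w t else lam w (rename y z t)
  | app t u => app (rename y z t) (rename y z u)

theorem size_rename (y z : ℕ) : ∀ t : Tm, (rename y z t).size = t.size
  | var w => by by_cases h : w = y <;> simp [rename, h, size]
  | hole _ => rfl
  | lam w t => by
      by_cases h : w = y <;> simp [rename, h, size, size_rename y z t]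
  | app t u => by simp [rename, size, size_rename y z t, size_rename y z u]

/-- Free variables. -/
def fv : Tm → List ℕ
  | var w => [w]
  | hole _ => []
  | lam w t => (fv t).filter (fun v => v ≠ w)
  | app t u => fv t ++ fv u

/-- All variables occurring (free, bound and binders). -/
def allVars : Tm → List ℕ
  | var w => [w]
  | hole _ => []
  | lam w t => w :: allVars t
  | app t u => allVars t ++ allVars u

/-- The binders of a term, in order. -/
def binders : Tm → List ℕ
  | var _ => []
  | hole _ => []
  | lam w t => w :: binders t
  | app t u => binders t ++ binders u

/-- Names of the holes, in order. -/
def holes : Tm → List ℕ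
  | var _ => []
  | hole a => [a]
  | lam _ t => holes t
  | app t u => holes t ++ holes u

/-- A pure λ-term: no named holes. -/
def NoHole (t : Tm) : Prop := t.holes = []

/-- Well-named: pairwise distinct bound names. -/
def WellNamed (t : Tm) : Prop := t.binders.Nodup

/-- A variable fresh for the given list. -/
def freshVar (l : List ℕ) : ℕ := (l.foldr max 0) + 1

/-- Capture-avoiding substitution `t{x := u}` (as `Tm.subst x u t`). -/
def subst (x : ℕ) (u : Tm) : Tm → Tm
  | var w => if w = x then u else var w
  | hole a => hole a
  | app t v => app (subst x u t) (subst x u v)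
  | lam w t =>
      if w = x then lam w t
      else if w ∈ u.fv then
        let z := freshVar (x :: (u.fv ++ t.fv ++ [w]))
        lam z (subst x u (rename w z t))
      else lam w (subst x u t)
  termination_by t => t.size
  decreasing_by all_goals simp [size, size_rename] <;> omega

/-- Capture-allowing plugging of `c` for the hole named `a` (as `Tm.plug a c t`). -/
def plug (a : ℕ) (c : Tm) : Tm → Tm
  | var w => var w
  | hole b => if b = a then c else hole b
  | lam w t => lam w (plug a c t)
  | app t u => app (plug a c t) (plug a c u)

end Tm

/-- α-equivalence (generating relation). -/
inductive Alpha : Tm → Tm → Prop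
  | var (x : ℕ) : Alpha (.var x) (.var x)
  | hole (a : ℕ) : Alpha (.hole a) (.hole a)
  | app {t t' u u' : Tm} : Alpha t t' → Alpha u u' → Alpha (.app t u) (.app t' u')
  | lam (x y : ℕ) (t u : Tm) :
      (∀ z, z ∉ t.allVars → z ∉ u.allVars → Alpha (t.rename x z) (u.rename y z)) →
      Alpha (.lam x t) (.lam y u)

/-- α-equivalence, as an equivalence relation. -/
def AEq : Tm → Tm → Prop := Relation.EqvGen Alpha

/-- Root β-reduction: (λx.t)u ↦β t{x:=u}. -/
inductive Root : Tm → Tm → Prop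
  | beta (x : ℕ) (t u : Tm) : Root (.app (.lam x t) u) (Tm.subst x u t)

/-- One-hole contexts. -/
inductive Ctx where
  | hole : Ctx
  | lam : ℕ → Ctx → Ctx
  | appL : Ctx → Tm → Ctx
  | appR : Tm → Ctx → Ctx

/-- Plugging a term in a one-hole context. -/
def Ctx.fill : Ctx → Tm → Tm
  | .hole, t => t
  | .lam x C, t => .lam x (C.fill t)
  | .appL C u, t => .app (C.fill t) u
  | .appR u C, t => .app u (C.fill t)

/-- β-reduction: closure of root β under arbitrary contexts. -/
def Beta (t u : Tm) : Prop :=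
  ∃ (C : Ctx) (a b : Tm), Root a b ∧ t = C.fill a ∧ u = C.fill b

mutual
  /-- NeutralTm terms: n ::= x | n f. -/
  inductive NeutralTm : Tm → Prop
    | var (x : ℕ) : NeutralTm (.var x)
    | app {n f : Tm} : NeutralTm n → NormalTm f → NeutralTm (.app n f)
  /-- NormalTm forms: f ::= n | λx.f. -/
  inductive NormalTm : Tm → Prop
    | neu {n : Tm} : NeutralTm n → NormalTm n
    | lam (x : ℕ) {f : Tm} : NormalTm f → NormalTm (.lam x f)
end

/-- Rigid terms: r ::= x | r t. -/
inductive RigidTm : Tm → Prop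
  | var (x : ℕ) : RigidTm (.var x)
  | app {r t : Tm} : RigidTm r → RigidTm (.app r t)

mutual
  /-- NeutralTm contexts: N ::= ⟨·⟩ | n L | N t. -/
  inductive NeutralCtx : Ctx → Prop
    | hole : NeutralCtx .hole
    | appR {n : Tm} {L : Ctx} : NeutralTm n → LeftmostCtx L → NeutralCtx (.appR n L)
    | appL {N : Ctx} {t : Tm} : NeutralCtx N → NeutralCtx (.appL N t)
  /-- Leftmost contexts: L ::= N | λx.L. -/
  inductive LeftmostCtx : Ctx → Prop
    | neu {N : Ctx} : NeutralCtx N → LeftmostCtx N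
    | lam (x : ℕ) {L : Ctx} : LeftmostCtx L → LeftmostCtx (.lam x L)
end

mutual
  /-- Rigid contexts: S ::= ⟨·⟩ | r B | S t. -/
  inductive RigidCtx : Ctx → Prop
    | hole : RigidCtx .hole
    | appR {r : Tm} {B : Ctx} : RigidTm r → ExtCtx B → RigidCtx (.appR r B)
    | appL {S : Ctx} {t : Tm} : RigidCtx S → RigidCtx (.appL S t)
  /-- External contexts: B ::= S | λx.B. -/
  inductive ExtCtx : Ctx → Prop
    | rig {S : Ctx} : RigidCtx S → ExtCtx S
    | lam (x : ℕ) {B : Ctx} : ExtCtx B → ExtCtx (.lam x B)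
end

/-- Leftmost(-outermost) reduction: closure of root β under leftmost contexts. -/
def LoStep (t u : Tm) : Prop :=
  ∃ (C : Ctx) (a b : Tm), LeftmostCtx C ∧ Root a b ∧ t = C.fill a ∧ u = C.fill b

/-- External reduction: closure of root β under external contexts. -/
def XStep (t u : Tm) : Prop :=
  ∃ (C : Ctx) (a b : Tm), ExtCtx C ∧ Root a b ∧ t = C.fill a ∧ u = C.fill b

/-- External reduction, on α-equivalence classes (via representatives). -/
def XStepA (t u : Tm) : Prop := ∃ t' u', AEq t t' ∧ XStep t' u' ∧ AEq u' u

/-- Leftmost reduction, on α-equivalence classes (via representatives). -/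
def LoStepA (t u : Tm) : Prop := ∃ t' u', AEq t t' ∧ LoStep t' u' ∧ AEq u' u

/-- `NSteps r k a b`: a sequence of exactly `k` `r`-steps from `a` to `b`. -/
inductive NSteps {α : Type*} (r : α → α → Prop) : ℕ → α → α → Prop
  | refl (a : α) : NSteps r 0 a a
  | step {a b c : α} {n : ℕ} : r a b → NSteps r n b c → NSteps r (n + 1) a c

/-! ### The Set EXAM -/

mutual
  /-- Rigid approximants: S ::= x | S B. -/
  inductive RigidApx : Tm → Prop
    | var (x : ℕ) : RigidApx (.var x)
    | app {S B : Tm} : RigidApx S → Apx B → RigidApx (.app S B)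
  /-- Approximants: B ::= ⟨·⟩α | S | λx.B. -/
  inductive Apx : Tm → Prop
    | hole (a : ℕ) : Apx (.hole a)
    | rig {S : Tm} : RigidApx S → Apx S
    | lam (x : ℕ) {B : Tm} : Apx B → Apx (.lam x B)
end

/-- The multi-context x ⟨·⟩β₁ … ⟨·⟩βₙ. -/
def mkHoles (x : ℕ) (bs : List ℕ) : Tm :=
  bs.foldl (fun acc b => Tm.app acc (Tm.hole b)) (Tm.var x)

/-- A named job (t, S)α. -/
structure Job where
  name : ℕ
  tm : Tm
  stk : List Tm
deriving DecidableEq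

/-- Environments: lists of entries [x ← t]. -/
abbrev Env := List (ℕ × Tm)

def Env.dom (E : Env) : List ℕ := E.map Prod.fst

def Env.lookup : Env → ℕ → Option Tm
  | [], _ => none
  | (y, t) :: E, x => if x = y then some t else Env.lookup E x

/-- A Set EXAM state: an approximant, a pool of jobs, an environment. -/
structure State where
  apx : Tm
  pool : Set Job
  env : Env

/-- The names of the jobs of a pool. -/
def poolNames (P : Set Job) : Set ℕ := Job.name '' P

/-- The jobs of the pool have pairwise distinct names. -/
def DistinctNames (P : Set Job) : Prop :=
  ∀ j ∈ P, ∀ k ∈ P, j.name = k.name → j = k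

def Job.Wf (j : Job) : Prop := Tm.NoHole j.tm ∧ ∀ t ∈ j.stk, Tm.NoHole t

def Env.Wf (E : Env) : Prop := ∀ p ∈ E, Tm.NoHole p.2

/-- Structural well-formedness of a Set EXAM state: the first component is an
approximant (a multi-context with pairwise distinct hole names), the pool is a
finite set of jobs with pairwise distinct names, and jobs and environment are
made of pure λ-terms. -/
def WfState (s : State) : Prop :=
  Apx s.apx ∧ s.apx.holes.Nodup ∧ s.pool.Finite ∧ DistinctNames s.pool ∧
    (∀ j ∈ s.pool, j.Wf) ∧ s.env.Wf

def Job.vars (j : Job) : Set ℕ :=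
  {v | v ∈ j.tm.allVars ∨ ∃ t ∈ j.stk, v ∈ t.allVars}

def Env.vars (E : Env) : Set ℕ :=
  {v | ∃ p ∈ E, v = p.1 ∨ v ∈ p.2.allVars}

def State.vars (s : State) : Set ℕ :=
  {v | v ∈ s.apx.allVars} ∪ (⋃ j ∈ s.pool, j.vars) ∪ s.env.vars

/-- `R` is a fresh well-named renaming of `t` with respect to the state `s`. -/
def FreshRenaming (t R : Tm) (s : State) : Prop :=
  Alpha t R ∧ R.WellNamed ∧ ∀ v ∈ R.binders, v ∉ s.vars

/-- The set of new jobs (t₁,ε)β₁, …, (tₙ,ε)βₙ. -/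
def newJobs (ts : List Tm) (bs : List ℕ) : Set Job :=
  {j | ∃ p ∈ ts.zip bs, j = ⟨p.2, p.1, []⟩}

/-- Overhead transitions of the Set EXAM: sea@, sub, seaλ, seaV. -/
inductive OStep : State → State → Prop
  | seaApp (B : Tm) (P : Set Job) (E : Env) (t u : Tm) (S : List Tm) (α : ℕ)
      (hα : α ∉ poolNames P) :
      OStep ⟨B, insert ⟨α, .app t u, S⟩ P, E⟩ ⟨B, insert ⟨α, t, u :: S⟩ P, E⟩
  | sub (B : Tm) (P : Set Job) (E : Env) (x : ℕ) (S : List Tm) (α : ℕ) (t R : Tm)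
      (hα : α ∉ poolNames P) (hx : E.lookup x = some t)
      (hR : FreshRenaming t R ⟨B, insert ⟨α, .var x, S⟩ P, E⟩) :
      OStep ⟨B, insert ⟨α, .var x, S⟩ P, E⟩ ⟨B, insert ⟨α, R, S⟩ P, E⟩
  | seaLam (B : Tm) (P : Set Job) (E : Env) (x : ℕ) (t : Tm) (α : ℕ)
      (hα : α ∉ poolNames P) :
      OStep ⟨B, insert ⟨α, .lam x t, []⟩ P, E⟩
            ⟨Tm.plug α (.lam x (.hole α)) B, insert ⟨α, t, []⟩ P, E⟩
  | seaV (B : Tm) (P : Set Job) (E : Env) (x : ℕ) (ts : List Tm) (α : ℕ) (bs : List ℕ)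
      (hα : α ∉ poolNames P) (hx : E.lookup x = none)
      (hlen : bs.length = ts.length) (hnd : bs.Nodup)
      (hfresh : ∀ b ∈ bs, b ∉ B.holes ∧ b ∉ poolNames P ∧ b ≠ α) :
      OStep ⟨B, insert ⟨α, .var x, ts⟩ P, E⟩
            ⟨Tm.plug α (mkHoles x bs) B, newJobs ts bs ∪ P, E⟩

/-- The β-transition of the Set EXAM. -/
inductive BStep : State → State → Prop
  | beta (B : Tm) (P : Set Job) (E : Env) (x : ℕ) (t u : Tm) (S : List Tm) (α : ℕ)
      (hα : α ∉ poolNames P) :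
      BStep ⟨B, insert ⟨α, .lam x t, u :: S⟩ P, E⟩
            ⟨B, insert ⟨α, t, S⟩ P, (x, u) :: E⟩

/-- The transition relation of the Set EXAM. -/
def MStep (s s' : State) : Prop := OStep s s' ∨ BStep s s'

/-- Initialization `t ◦ s`. -/
def Init (t : Tm) (s : State) : Prop :=
  t.NoHole ∧ ∃ (t' : Tm) (α : ℕ), Alpha t t' ∧ t'.WellNamed ∧
    s = ⟨.hole α, {⟨α, t', []⟩}, []⟩

/-- Reachable Set EXAM states. -/
def Reachable (s : State) : Prop :=
  ∃ t s₀, Init t s₀ ∧ Relation.ReflTransGen MStep s₀ s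

/-- t⟦E⟧: applying an environment to a term. -/
def applyEnvT : Tm → Env → Tm
  | t, [] => t
  | t, (x, u) :: E => applyEnvT (Tm.subst x u t) E

/-- The read-back of a job: its term applied, in order, to the stack. -/
def Job.rb (j : Job) : Tm := j.stk.foldl Tm.app j.tm

/-- Applying an environment to both components of a job. -/
def Job.applyEnv (j : Job) (E : Env) : Job :=
  ⟨j.name, applyEnvT j.tm E, j.stk.map (fun t => applyEnvT t E)⟩

/-- Simultaneous plugging of the holes of a multi-context according to `f`. -/
def plugAll (f : ℕ → Option Tm) : Tm → Tm
  | .var x => .var x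
  | .hole a => (f a).getD (.hole a)
  | .lam x t => .lam x (plugAll f t)
  | .app t u => .app (plugAll f t) (plugAll f u)

/-- The (env-applied) read-back of the job of name `a` in the pool `P`, if any. -/
noncomputable def poolFun (P : Set Job) (E : Env) : ℕ → Option Tm := fun a =>
  @dite _ (∃ j, j ∈ P ∧ j.name = a) (Classical.dec _)
    (fun h => some ((h.choose.applyEnv E).rb)) (fun _ => none)

/-- The read-back ⟦s⟧ of a Set EXAM state. -/
noncomputable def State.rb (s : State) : Tm :=
  plugAll (poolFun s.pool s.env) s.apx

/-- Swap of two independent environment entries. -/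
inductive EnvSwap : Env → Env → Prop
  | swap (E E' : Env) (x y : ℕ) (t u : Tm)
      (hx : x ∉ Tm.fv u) (hy : y ∉ Tm.fv t) :
      EnvSwap (E ++ (x, t) :: (y, u) :: E') (E ++ (y, u) :: (x, t) :: E')

/-- ≈: the least equivalence relation containing `EnvSwap`. -/
def EnvEq : Env → Env → Prop := Relation.EqvGen EnvSwap

/-- ≡ on states: equality up to ≈ of the environments. -/
def StateEq (s s' : State) : Prop :=
  s.apx = s'.apx ∧ s.pool = s'.pool ∧ EnvEq s.env s'.env

/-- `Run b o k s s'`: a run from `s` to `s'` with exactly `k` β-transitions. -/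
inductive Run {α : Type*} (b o : α → α → Prop) : ℕ → α → α → Prop
  | refl (a : α) : Run b o 0 a a
  | beta {a a' c : α} {k : ℕ} : b a a' → Run b o k a' c → Run b o (k + 1) a c
  | ov {a a' c : α} {k : ℕ} : o a a' → Run b o k a' c → Run b o k a c

mutual
  /-- `RigidCtxTm α C`: the multi-context `C`, whose only hole is `⟨·⟩α`,
  is a rigid context once `⟨·⟩α` is regarded as the context hole ⟨·⟩. -/
  inductive RigidCtxTm (α : ℕ) : Tm → Prop
    | hole : RigidCtxTm α (.hole α)
    | appR {r B : Tm} : RigidTm r → r.NoHole → ExtCtxTm α B → RigidCtxTm α (.app r B)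
    | appL {S t : Tm} : RigidCtxTm α S → t.NoHole → RigidCtxTm α (.app S t)
  /-- `ExtCtxTm α C`: the multi-context `C`, whose only hole is `⟨·⟩α`,
  is an external context once `⟨·⟩α` is regarded as the context hole ⟨·⟩. -/
  inductive ExtCtxTm (α : ℕ) : Tm → Prop
    | rig {S : Tm} : RigidCtxTm α S → ExtCtxTm α S
    | lam (x : ℕ) {B : Tm} : ExtCtxTm α B → ExtCtxTm α (.lam x B)
end

namespace Tm

theorem size_pos : ∀ t : Tm, 0 < t.size
  | var _ => Nat.one_pos
  | hole _ => Nat.one_pos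
  | lam _ t => by simp [size]
  | app t u => by simp [size]

theorem rename_self (x : ℕ) : ∀ t : Tm, rename x x t = t
  | var w => by by_cases h : w = x <;> simp [rename, h]
  | hole _ => rfl
  | lam w t => by by_cases h : w = x <;> simp [rename, h, rename_self x t]
  | app t u => by simp [rename, rename_self x t, rename_self x u]

theorem rename_of_not_mem {x : ℕ} (z : ℕ) : ∀ {t : Tm}, x ∉ t.allVars → rename x z t = t
  | var w, h => by
      have : w ≠ x := by rintro rfl; exact h (by simp [allVars])
      simp [rename, this]
  | hole _, _ => rfl
  | lam w t, h => by
      have h1 : x ≠ w := by rintro rfl; exact h (by simp [allVars])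
      have h2 : x ∉ t.allVars := fun hc => h (by simp [allVars, hc])
      simp [rename, Ne.symm h1, rename_of_not_mem z h2]
  | app t u, h => by
      have h1 : x ∉ t.allVars := fun hc => h (by simp [allVars, hc])
      have h2 : x ∉ u.allVars := fun hc => h (by simp [allVars, hc])
      simp [rename, rename_of_not_mem z h1, rename_of_not_mem z h2]

theorem binders_rename (x z : ℕ) : ∀ t : Tm, (rename x z t).binders = t.binders
  | var w => by by_cases h : w = x <;> simp [rename, h, binders]
  | hole _ => rfl
  | lam w t => by
      by_cases h : w = x <;> simp [rename, h, binders, binders_rename x z t]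
  | app t u => by simp [rename, binders, binders_rename x z t, binders_rename x z u]

theorem holes_rename (x z : ℕ) : ∀ t : Tm, (rename x z t).holes = t.holes
  | var w => by by_cases h : w = x <;> simp [rename, h, holes]
  | hole _ => rfl
  | lam w t => by
      by_cases h : w = x <;> simp [rename, h, holes, holes_rename x z t]
  | app t u => by simp [rename, holes, holes_rename x z t, holes_rename x z u]

theorem mem_allVars_rename {x z v : ℕ} :
    ∀ {t : Tm}, v ∈ (rename x z t).allVars → v ∈ t.allVars ∨ v = z
  | var w, h => by
      by_cases hw : w = x <;> simp [rename, hw, allVars] at h <;> simp [allVars, h]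
  | hole _, h => by simp [rename, allVars] at h
  | lam w t, h => by
      by_cases hw : w = x
      · subst hw; simp [rename] at h; exact Or.inl h
      · simp [rename, hw, allVars] at h
        rcases h with h | h
        · exact Or.inl (by simp [allVars, h])
        · rcases mem_allVars_rename h with h' | h'
          · exact Or.inl (by simp [allVars, h'])
          · exact Or.inr h'
  | app t u, h => by
      simp [rename, allVars] at h
      rcases h with h | h
      · rcases mem_allVars_rename h with h' | h'
        · exact Or.inl (by simp [allVars, h'])
        · exact Or.inr h'
      · rcases mem_allVars_rename h with h' | h'
        · exact Or.inl (by simp [allVars, h'])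
        · exact Or.inr h'

theorem binders_subset_allVars : ∀ {t : Tm} {v : ℕ}, v ∈ t.binders → v ∈ t.allVars
  | var _, _, h => by simp [binders] at h
  | hole _, _, h => by simp [binders] at h
  | lam w t, v, h => by
      simp [binders] at h; rcases h with h | h
      · simp [allVars, h]
      · simp [allVars, binders_subset_allVars h]
  | app t u, v, h => by
      simp [binders] at h
      rcases h with h | h
      · simp [allVars, binders_subset_allVars h]
      · simp [allVars, binders_subset_allVars h]

theorem rename_comm {x v y z : ℕ} (hxy : x ≠ y) (hxz : x ≠ z) (hvy : v ≠ y) (hvz : v ≠ z) :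
    ∀ t : Tm, rename y z (rename x v t) = rename x v (rename y z t)
  | var w => by
      by_cases h1 : w = x
      · subst h1; simp [rename, hxy, hvy, hxz]
      · by_cases h2 : w = y
        · subst h2; simp [rename, h1, Ne.symm hxy, Ne.symm hxz]
        · simp [rename, h1, h2]
  | hole _ => rfl
  | lam w t => by
      by_cases h1 : w = x
      · subst h1; simp [rename, hxy, Ne.symm hxy]
      · by_cases h2 : w = y
        · subst h2; simp [rename, h1, hvy, Ne.symm hvy]
        · simp [rename, h1, h2, rename_comm hxy hxz hvy hvz t]
  | app t u => by
      simp [rename, rename_comm hxy hxz hvy hvz t, rename_comm hxy hxz hvy hvz u]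

theorem rename_comp {v w x : ℕ} : ∀ {t : Tm}, v ∉ t.allVars →
    rename v w (rename x v t) = rename x w t
  | var u, h => by
      have huv : u ≠ v := by rintro rfl; exact h (by simp [allVars])
      by_cases h1 : u = x
      · subst h1; simp [rename]
      · simp [rename, h1, huv]
  | hole _, _ => rfl
  | lam u t, h => by
      have huv : u ≠ v := by rintro rfl; exact h (by simp [allVars])
      have h2 : v ∉ t.allVars := fun hc => h (by simp [allVars, hc])
      by_cases h1 : u = x
      · subst h1; simp [rename, huv, rename_of_not_mem w h2]
      · simp [rename, h1, huv, rename_comp h2]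
  | app t u, h => by
      have h1 : v ∉ t.allVars := fun hc => h (by simp [allVars, hc])
      have h2 : v ∉ u.allVars := fun hc => h (by simp [allVars, hc])
      simp [rename, rename_comp h1, rename_comp h2]

theorem le_freshVar : ∀ {l : List ℕ} {v : ℕ}, v ∈ l → v < freshVar l := by
  intro l
  have : ∀ v ∈ l, v ≤ l.foldr max 0 := by
    induction l with
    | nil => simp
    | cons a l ih =>
        intro v hv
        rcases List.mem_cons.1 hv with rfl | hv
        · exact le_max_left _ _
        · exact le_trans (ih v hv) (le_max_right _ _)
  intro v hv
  exact Nat.lt_succ_of_le (this v hv)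

theorem freshVar_not_mem (l : List ℕ) : freshVar l ∉ l :=
  fun h => absurd (le_freshVar h) (lt_irrefl _)

end Tm

open Tm in
theorem alpha_rename : ∀ (n : ℕ) (t u : Tm), t.size ≤ n → Alpha t u →
    ∀ y z, y ∉ t.binders → y ∉ u.binders → z ∉ t.allVars → z ∉ u.allVars → z ≠ y →
    Alpha (t.rename y z) (u.rename y z) := by
  intro n
  induction n with
  | zero => intro t u hsz; exact absurd hsz (by have := Tm.size_pos t; omega)
  | succ n ih =>
    intro t u hsz ha y z hy hyu hz hzu hzy
    cases ha with
    | var x =>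
        by_cases h : x = y <;> simp [rename, h] <;> constructor
    | hole a => exact Alpha.hole a
    | app h1 h2 =>
        rename_i t1 t1' t2 t2'
        simp [Tm.size] at hsz
        simp [binders] at hy hyu
        simp [allVars] at hz hzu
        have s1 : t1.size ≤ n := by have := Tm.size_pos t2; omega
        have s2 : t2.size ≤ n := by have := Tm.size_pos t1; omega
        exact Alpha.app
          (ih t1 t1' s1 h1 y z hy.1 hyu.1 hz.1 hzu.1 hzy)
          (ih t2 t2' s2 h2 y z hy.2 hyu.2 hz.2 hzu.2 hzy)
    | lam x x' a a' H =>
        simp [binders] at hy hyu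
        simp [allVars] at hz hzu
        simp [Tm.size] at hsz
        have hsa : a.size ≤ n := hsz
        rw [show rename y z (Tm.lam x a) = Tm.lam x (rename y z a) by
              simp [rename, Ne.symm hy.1],
            show rename y z (Tm.lam x' a') = Tm.lam x' (rename y z a') by
              simp [rename, Ne.symm hyu.1]]
        apply Alpha.lam
        intro w hw hw'
        set L := a.allVars ++ a'.allVars ++ [x, x', y, z, w] with hL
        set v := freshVar L with hv
        have hvfr : ∀ c ∈ L, c ≠ v := fun c hc => Nat.ne_of_lt (le_freshVar hc)
        have hva : v ∉ a.allVars := fun hc => hvfr v (by simp [hL, hc]) rfl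
        have hva' : v ∉ a'.allVars := fun hc => hvfr v (by simp [hL, hc]) rfl
        have hvx : x ≠ v := hvfr x (by simp [hL])
        have hvx' : x' ≠ v := hvfr x' (by simp [hL])
        have hvy : y ≠ v := hvfr y (by simp [hL])
        have hvz : z ≠ v := hvfr z (by simp [hL])
        have hvw : w ≠ v := hvfr w (by simp [hL])
        have Hv : Alpha (a.rename x v) (a'.rename x' v) := H v hva hva'
        -- first rename (y,z)
        have nza : z ∉ (a.rename x v).allVars := fun hc => by
          rcases mem_allVars_rename hc with h | h
          · exact hz.2 h
          · exact hvz h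
        have nza' : z ∉ (a'.rename x' v).allVars := fun hc => by
          rcases mem_allVars_rename hc with h | h
          · exact hzu.2 h
          · exact hvz h
        have step1 : Alpha ((a.rename x v).rename y z) ((a'.rename x' v).rename y z) :=
          ih _ _ (by rw [size_rename]; exact hsa) Hv y z
            (by rw [binders_rename]; exact hy.2)
            (by rw [binders_rename]; exact hyu.2)
            nza nza' hzy
        -- second rename (v,w)
        have comm1 : (a.rename x v).rename y z = (a.rename y z).rename x v :=
          rename_comm (Ne.symm hy.1) (fun h => hz.1 h.symm) (Ne.symm hvy) (Ne.symm hvz) a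
        have comm1' : (a'.rename x' v).rename y z = (a'.rename y z).rename x' v :=
          rename_comm (Ne.symm hyu.1) (fun h => hzu.1 h.symm) (Ne.symm hvy) (Ne.symm hvz) a'
        have hvyz : v ∉ (a.rename y z).allVars := fun hc => by
          rcases mem_allVars_rename hc with h | h
          · exact hva h
          · exact hvz h.symm
        have hvyz' : v ∉ (a'.rename y z).allVars := fun hc => by
          rcases mem_allVars_rename hc with h | h
          · exact hva' h
          · exact hvz h.symm
        have nw : w ∉ ((a.rename x v).rename y z).allVars := by
          rw [comm1]; intro hc
          rcases mem_allVars_rename hc with h | h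
          · exact hw h
          · exact hvw h
        have nw' : w ∉ ((a'.rename x' v).rename y z).allVars := by
          rw [comm1']; intro hc
          rcases mem_allVars_rename hc with h | h
          · exact hw' h
          · exact hvw h
        have step2 : Alpha (((a.rename x v).rename y z).rename v w)
            (((a'.rename x' v).rename y z).rename v w) :=
          ih _ _ (by rw [size_rename, size_rename]; exact hsa) step1 v w
            (by rw [binders_rename, binders_rename]
                exact fun hc => hva (binders_subset_allVars hc))
            (by rw [binders_rename, binders_rename]
                exact fun hc => hva' (binders_subset_allVars hc))
            nw nw' hvw
        rw [comm1, comm1', rename_comp hvyz, rename_comp hvyz'] at step2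
        exact step2

namespace Tm

/-- Freshening: rename all binders to fresh names `≥ n`. -/
def fr (n : ℕ) : Tm → Tm × ℕ
  | .var x => (.var x, n)
  | .hole a => (.hole a, n)
  | .app t u =>
      let p := fr n t
      let q := fr p.2 u
      (.app p.1 q.1, q.2)
  | .lam x b =>
      let p := fr (n+1) (Tm.rename x n b)
      (.lam n p.1, p.2)
  termination_by t => t.size
  decreasing_by all_goals simp [Tm.size, Tm.size_rename] <;> omega

theorem fr_spec : ∀ (k : ℕ) (t : Tm), t.size ≤ k → ∀ n,
    n ≤ (fr n t).2 ∧ (∀ v ∈ (fr n t).1.binders, n ≤ v ∧ v < (fr n t).2) ∧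
    (fr n t).1.binders.Nodup ∧ (fr n t).1.holes = t.holes := by
  intro k
  induction k with
  | zero => intro t hsz; exact absurd hsz (by have := Tm.size_pos t; omega)
  | succ k ih =>
    intro t hsz n
    match t with
    | .var x => simp [fr, binders, holes]
    | .hole a => simp [fr, binders, holes]
    | .app t u =>
        simp [Tm.size] at hsz
        have s1 : t.size ≤ k := by have := Tm.size_pos u; omega
        have s2 : u.size ≤ k := by have := Tm.size_pos t; omega
        obtain ⟨h1, h2, h3, h4⟩ := ih t s1 n
        obtain ⟨g1, g2, g3, g4⟩ := ih u s2 (fr n t).2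
        simp only [fr]
        refine ⟨le_trans h1 g1, ?_, ?_, ?_⟩
        · intro v hv
          simp [fr, binders] at hv ⊢
          rcases hv with hv | hv
          · obtain ⟨a, b⟩ := h2 v hv; exact ⟨a, lt_of_lt_of_le b g1⟩
          · obtain ⟨a, b⟩ := g2 v hv; exact ⟨le_trans h1 a, b⟩
        · simp [fr, binders]
          refine List.Nodup.append h3 g3 ?_
          intro v hv hv'
          obtain ⟨_, b⟩ := h2 v hv
          obtain ⟨a, _⟩ := g2 v hv'
          omega
        · simp [fr, holes, h4, g4]
    | .lam x b =>
        simp [Tm.size] at hsz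
        have s1 : (Tm.rename x n b).size ≤ k := by rw [size_rename]; exact hsz
        obtain ⟨h1, h2, h3, h4⟩ := ih (Tm.rename x n b) s1 (n+1)
        simp only [fr]
        refine ⟨by omega, ?_, ?_, ?_⟩
        · intro v hv
          simp [fr, binders] at hv ⊢
          rcases hv with rfl | hv
          · omega
          · obtain ⟨a, c⟩ := h2 v hv; omega
        · simp [fr, binders, List.nodup_cons]
          exact ⟨fun hc => by have := (h2 n hc).1; omega, h3⟩
        · simp [fr, holes]; rw [h4, holes_rename]

theorem alpha_fr : ∀ (k : ℕ) (t : Tm), t.size ≤ k → ∀ n,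
    (∀ v ∈ t.allVars, v < n) → Alpha t (fr n t).1 := by
  intro k
  induction k with
  | zero => intro t hsz; exact absurd hsz (by have := Tm.size_pos t; omega)
  | succ k ih =>
    intro t hsz n hvars
    match t with
    | .var x => simp only [fr]; exact Alpha.var x
    | .hole a => simp only [fr]; exact Alpha.hole a
    | .app t u =>
        simp [Tm.size] at hsz
        have s1 : t.size ≤ k := by have := Tm.size_pos u; omega
        have s2 : u.size ≤ k := by have := Tm.size_pos t; omega
        have hv1 : ∀ v ∈ t.allVars, v < n := fun v hv => hvars v (by simp [allVars, hv])
        have hv2 : ∀ v ∈ u.allVars, v < (fr n t).2 := fun v hv =>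
          lt_of_lt_of_le (hvars v (by simp [allVars, hv])) (fr_spec k t s1 n).1
        simp only [fr]
        exact Alpha.app (ih t s1 n hv1) (ih u s2 _ hv2)
    | .lam x b =>
        simp [Tm.size] at hsz
        have s1 : (Tm.rename x n b).size ≤ k := by rw [size_rename]; exact hsz
        have hvb : ∀ v ∈ b.allVars, v < n := fun v hv => hvars v (by simp [allVars, hv])
        have hxn : x < n := hvars x (by simp [allVars])
        have hnb : n ∉ b.allVars := fun hc => lt_irrefl n (hvb n hc)
        have hvr : ∀ v ∈ (Tm.rename x n b).allVars, v < n + 1 := by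
          intro v hv
          rcases mem_allVars_rename hv with h | h
          · exact Nat.lt_succ_of_lt (hvb v h)
          · omega
        have IH : Alpha (Tm.rename x n b) (fr (n+1) (Tm.rename x n b)).1 :=
          ih _ s1 (n+1) hvr
        simp only [fr]
        show Alpha (Tm.lam x b) (Tm.lam n (fr (n+1) (Tm.rename x n b)).1)
        apply Alpha.lam
        intro z hza hzb'
        by_cases hzn : z = n
        · subst hzn; rw [rename_self]
          exact IH
        · have spec := fr_spec k (Tm.rename x n b) s1 (n+1)
          have step := alpha_rename ((Tm.rename x n b).size) _ _ le_rfl IH n z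
            (by rw [binders_rename]
                exact fun hc => lt_irrefl n (hvb n (binders_subset_allVars hc)))
            (fun hc => by have := (spec.2.1 n hc).1; omega)
            (by intro hc
                rcases mem_allVars_rename hc with h | h
                · exact hza h
                · exact hzn h)
            hzb' hzn
          rwa [rename_comp hnb] at step

end Tm

namespace Tm

theorem mem_holes_plug {a : ℕ} {C : Tm} : ∀ {B : Tm} {b : ℕ},
    b ∈ (plug a C B).holes → b ∈ C.holes ∨ (b ∈ B.holes ∧ b ≠ a) := by
  intro B
  induction B with
  | var x => intro b h; simp [plug, holes] at h
  | hole c =>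
      intro b h
      by_cases hc : c = a
      · simp [plug, hc] at h; exact Or.inl h
      · simp [plug, hc, holes] at h; subst h; exact Or.inr ⟨by simp [holes], hc⟩
  | lam x t ih =>
      intro b h
      simp only [plug, holes] at h ⊢
      exact ih h
  | app t u ih1 ih2 =>
      intro b h
      simp only [plug, holes, List.mem_append] at h ⊢
      rcases h with h | h
      · rcases ih1 h with h' | h'
        · exact Or.inl h'
        · exact Or.inr ⟨Or.inl h'.1, h'.2⟩
      · rcases ih2 h with h' | h'
        · exact Or.inl h'
        · exact Or.inr ⟨Or.inr h'.1, h'.2⟩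

theorem noHole_plugAll (g : ℕ → Option Tm) : ∀ {t : Tm}, t.holes = [] → plugAll g t = t
  | .var x, _ => rfl
  | .hole a, h => by simp [holes] at h
  | .lam x t, h => by
      simp only [holes] at h
      simp [plugAll, noHole_plugAll g h]
  | .app t u, h => by
      simp only [holes, List.append_eq_nil_iff] at h
      simp [plugAll, noHole_plugAll g h.1, noHole_plugAll g h.2]

end Tm

theorem apx_plug {a : ℕ} {C : Tm} (hC : Apx C) :
    ∀ B : Tm, (Apx B → Apx (Tm.plug a C B)) ∧ (RigidApx B → RigidApx (Tm.plug a C B)) := by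
  intro B
  induction B with
  | var x =>
      exact ⟨fun _ => by simpa [Tm.plug] using Apx.rig (RigidApx.var x),
             fun _ => by simpa [Tm.plug] using RigidApx.var x⟩
  | hole b =>
      constructor
      · intro _
        by_cases hb : b = a
        · simpa [Tm.plug, hb] using hC
        · simpa [Tm.plug, hb] using Apx.hole b
      · intro h; cases h
  | lam x t ih =>
      constructor
      · intro h
        cases h with
        | rig h => cases h
        | lam _ h => exact Apx.lam x (ih.1 h)
      · intro h; cases h
  | app t u ih1 ih2 =>
      constructor
      · intro h
        cases h with
        | rig h =>
          cases h with
          | app h1 h2 => exact Apx.rig (RigidApx.app (ih1.2 h1) (ih2.1 h2))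
      · intro h
        cases h with
        | app h1 h2 => exact RigidApx.app (ih1.2 h1) (ih2.1 h2)

theorem rigid_foldl : ∀ (bs : List ℕ) (S : Tm), RigidApx S →
    RigidApx (bs.foldl (fun acc b => Tm.app acc (Tm.hole b)) S)
  | [], S, h => h
  | b :: bs, S, h => rigid_foldl bs _ (RigidApx.app h (Apx.hole b))

theorem apx_mkHoles (x : ℕ) (bs : List ℕ) : Apx (mkHoles x bs) :=
  Apx.rig (rigid_foldl bs _ (RigidApx.var x))

theorem holes_foldl : ∀ (bs : List ℕ) (S : Tm),
    (bs.foldl (fun acc b => Tm.app acc (Tm.hole b)) S).holes = S.holes ++ bs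
  | [], S => by simp
  | b :: bs, S => by
      simp only [List.foldl_cons, holes_foldl bs]
      simp [Tm.holes]

theorem holes_mkHoles (x : ℕ) (bs : List ℕ) : (mkHoles x bs).holes = bs := by
  simp [mkHoles, holes_foldl, Tm.holes]

theorem apx_no_beta_aux {a b : Tm} (hr : Root a b) :
    ∀ (C : Ctx) (t : Tm), (Apx t ∨ RigidApx t) → t = C.fill a → False := by
  intro C
  induction C with
  | hole =>
      intro t ht he
      cases hr
      simp only [Ctx.fill] at he
      subst he
      rcases ht with h | h
      · cases h with
        | rig h => cases h with
          | app h1 _ => cases h1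
      · cases h with
        | app h1 _ => cases h1
  | lam x C ih =>
      intro t ht he
      simp only [Ctx.fill] at he
      subst he
      rcases ht with h | h
      · cases h with
        | rig h => cases h
        | lam _ h => exact ih _ (Or.inl h) rfl
      · cases h
  | appL C u ih =>
      intro t ht he
      simp only [Ctx.fill] at he
      subst he
      rcases ht with h | h
      · cases h with
        | rig h => cases h with
          | app h1 _ => exact ih _ (Or.inr h1) rfl
      · cases h with
        | app h1 _ => exact ih _ (Or.inr h1) rfl
  | appR u C ih =>
      intro t ht he
      simp only [Ctx.fill] at he
      subst he
      rcases ht with h | h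
      · cases h with
        | rig h => cases h with
          | app _ h2 => exact ih _ (Or.inl h2) rfl
      · cases h with
        | app _ h2 => exact ih _ (Or.inl h2) rfl

theorem apx_no_beta {f : Tm} (h : Apx f) : ∀ u, ¬ Beta f u := by
  rintro u ⟨C, a, b, hr, hfa, _⟩
  exact apx_no_beta_aux hr C f (Or.inl h) hfa

theorem alpha_holes : ∀ {t u : Tm}, Alpha t u → t.holes = u.holes := by
  intro t u h
  induction h with
  | var => rfl
  | hole => rfl
  | app _ _ ih1 ih2 => simp [Tm.holes, ih1, ih2]
  | lam x y a a' H ih =>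
      set z := Tm.freshVar (a.allVars ++ a'.allVars) with hz
      have h1 : z ∉ a.allVars := fun hc =>
        Tm.freshVar_not_mem _ (List.mem_append_left _ hc)
      have h2 : z ∉ a'.allVars := fun hc =>
        Tm.freshVar_not_mem _ (List.mem_append_right _ hc)
      have := ih z h1 h2
      simpa [Tm.holes, Tm.holes_rename] using this

theorem lookup_mem : ∀ {E : Env} {x : ℕ} {t : Tm}, Env.lookup E x = some t → (x, t) ∈ E := by
  intro E
  induction E with
  | nil => intro x t h; simp [Env.lookup] at h
  | cons p E ih =>
      intro x t h
      obtain ⟨y, u⟩ := p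
      simp only [Env.lookup] at h
      by_cases hxy : x = y
      · simp [hxy] at h; subst h; subst hxy; exact List.mem_cons_self
      · simp [hxy] at h; exact List.mem_cons_of_mem _ (ih h)

theorem poolNames_insert (j : Job) (P : Set Job) :
    poolNames (insert j P) = insert j.name (poolNames P) := Set.image_insert_eq

theorem distinct_mono {P Q : Set Job} (hs : P ⊆ Q) (h : DistinctNames Q) : DistinctNames P :=
  fun j hj k hk he => h j (hs hj) k (hs hk) he

theorem distinct_insert {j : Job} {P : Set Job} (hj : j.name ∉ poolNames P)
    (h : DistinctNames P) : DistinctNames (insert j P) := by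
  intro a ha b hb he
  rcases Set.mem_insert_iff.1 ha with ha' | ha' <;>
    rcases Set.mem_insert_iff.1 hb with hb' | hb'
  · rw [ha', hb']
  · subst ha'; exfalso; apply hj; rw [he]; exact Set.mem_image_of_mem _ hb'
  · subst hb'; exfalso; apply hj; rw [← he]; exact Set.mem_image_of_mem _ ha'
  · exact h a ha' b hb' he

theorem zip_snd_inj : ∀ (ts : List Tm) (bs : List ℕ), bs.Nodup →
    ∀ p ∈ ts.zip bs, ∀ q ∈ ts.zip bs, p.2 = q.2 → p = q := by
  intro ts
  induction ts with
  | nil => intro bs _ p hp; simp at hp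
  | cons t ts ih =>
      intro bs hnd p hp q hq he
      cases bs with
      | nil => simp at hp
      | cons b bs =>
          simp only [List.zip_cons_cons, List.mem_cons] at hp hq
          have hbn : b ∉ bs := (List.nodup_cons.1 hnd).1
          rcases hp with rfl | hp
          · rcases hq with rfl | hq
            · rfl
            · exfalso
              obtain ⟨q1, q2⟩ := q
              have := (List.of_mem_zip hq).2
              simp only at he
              rw [← he] at this
              exact hbn this
          · rcases hq with rfl | hq
            · exfalso
              obtain ⟨p1, p2⟩ := p
              have := (List.of_mem_zip hp).2
              simp only at he
              rw [he] at this
              exact hbn this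
            · exact ih bs (List.nodup_cons.1 hnd).2 p hp q hq he

theorem mem_zip_right : ∀ (ts : List Tm) (bs : List ℕ), bs.length = ts.length →
    ∀ b ∈ bs, ∃ t, (t, b) ∈ ts.zip bs := by
  intro ts
  induction ts with
  | nil => intro bs hlen b hb; simp at hlen; subst hlen; simp at hb
  | cons t ts ih =>
      intro bs hlen b hb
      cases bs with
      | nil => simp at hb
      | cons b' bs =>
          simp only [List.length_cons, Nat.succ.injEq] at hlen
          rcases List.mem_cons.1 hb with rfl | hb
          · exact ⟨t, by simp⟩
          · obtain ⟨t', ht'⟩ := ih bs hlen b hb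
            exact ⟨t', by simp [ht']⟩

theorem newJobs_finite (ts : List Tm) (bs : List ℕ) : (newJobs ts bs).Finite := by
  have hsub : newJobs ts bs ⊆ (fun p : Tm × ℕ => (⟨p.2, p.1, []⟩ : Job)) '' {p | p ∈ ts.zip bs} := by
    rintro j ⟨p, hp, rfl⟩
    exact ⟨p, hp, rfl⟩
  exact Set.Finite.subset (Set.Finite.image _ (List.finite_toSet _)) hsub

theorem ostep_pool_nonempty {a b : State} (h : OStep a b) : a.pool.Nonempty := by
  cases h <;> exact ⟨_, Set.mem_insert _ _⟩

theorem bstep_pool_nonempty {a b : State} (h : BStep a b) : a.pool.Nonempty := by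
  cases h; exact ⟨_, Set.mem_insert _ _⟩

theorem mstep_pool_nonempty {a b : State} (h : MStep a b) : a.pool.Nonempty := by
  rcases h with h | h
  · exact ostep_pool_nonempty h
  · exact bstep_pool_nonempty h

def InvS (s : State) : Prop :=
  Apx s.apx ∧ DistinctNames s.pool ∧ s.pool.Finite ∧ (∀ j ∈ s.pool, j.Wf) ∧ s.env.Wf ∧
    ∀ a ∈ s.apx.holes, a ∈ poolNames s.pool

theorem init_inv {t : Tm} {s : State} (h : Init t s) : InvS s := by
  obtain ⟨hnh, t', α, ha, hwn, rfl⟩ := h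
  refine ⟨Apx.hole α, ?_, Set.finite_singleton _, ?_, ?_, ?_⟩
  · intro a ha b hb he
    rw [Set.mem_singleton_iff.1 ha, Set.mem_singleton_iff.1 hb]
  · intro j hj
    rw [Set.mem_singleton_iff.1 hj]
    exact ⟨(alpha_holes ha).symm.trans hnh, by intro u hu; simp at hu⟩
  · intro p hp; simp at hp
  · intro a ha'
    simp only [Tm.holes, List.mem_singleton] at ha'
    subst ha'
    exact ⟨⟨a, t', []⟩, rfl, rfl⟩

theorem preservation {s s' : State} (h : MStep s s') (hI : InvS s) : InvS s' := by
  rcases h with h | h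
  · cases h with
    | seaApp B P E t u S α hα =>
        obtain ⟨hA, hD, hF, hW, hE, hH⟩ := hI
        have hPsub : P ⊆ insert (⟨α, .app t u, S⟩ : Job) P := Set.subset_insert _ _
        have hjold := hW _ (Set.mem_insert _ _)
        have hnh : (Tm.app t u).holes = [] := hjold.1
        simp only [Tm.holes, List.append_eq_nil_iff] at hnh
        refine ⟨hA, distinct_insert hα (distinct_mono hPsub hD), (hF.subset hPsub).insert _, ?_, hE, ?_⟩
        · intro j hj
          rcases Set.mem_insert_iff.1 hj with rfl | hj
          · refine ⟨hnh.1, ?_⟩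
            intro v hv
            rcases List.mem_cons.1 hv with rfl | hv
            · exact hnh.2
            · exact hjold.2 v hv
          · exact hW j (hPsub hj)
        · intro a ha
          have := hH a ha
          rwa [poolNames_insert] at this ⊢
    | sub B P E x S α t R hα hx hR =>
        obtain ⟨hA, hD, hF, hW, hE, hH⟩ := hI
        have hPsub : P ⊆ insert (⟨α, .var x, S⟩ : Job) P := Set.subset_insert _ _
        have hjold := hW _ (Set.mem_insert _ _)
        have htnh : t.holes = [] := hE _ (lookup_mem hx)
        refine ⟨hA, distinct_insert hα (distinct_mono hPsub hD), (hF.subset hPsub).insert _, ?_, hE, ?_⟩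
        · intro j hj
          rcases Set.mem_insert_iff.1 hj with rfl | hj
          · exact ⟨(alpha_holes hR.1).symm.trans htnh, hjold.2⟩
          · exact hW j (hPsub hj)
        · intro a ha
          have := hH a ha
          rwa [poolNames_insert] at this ⊢
    | seaLam B P E x t α hα =>
        obtain ⟨hA, hD, hF, hW, hE, hH⟩ := hI
        have hPsub : P ⊆ insert (⟨α, .lam x t, []⟩ : Job) P := Set.subset_insert _ _
        have hjold := hW _ (Set.mem_insert _ _)
        have hnh : t.holes = [] := hjold.1
        refine ⟨(apx_plug (Apx.lam x (Apx.hole α)) B).1 hA,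
          distinct_insert hα (distinct_mono hPsub hD), (hF.subset hPsub).insert _, ?_, hE, ?_⟩
        · intro j hj
          rcases Set.mem_insert_iff.1 hj with rfl | hj
          · exact ⟨hnh, by intro u hu; simp at hu⟩
          · exact hW j (hPsub hj)
        · intro a ha
          rcases Tm.mem_holes_plug ha with h' | h'
          · simp only [Tm.holes] at h'
            rw [List.mem_singleton] at h'
            subst h'
            rw [poolNames_insert]
            exact Set.mem_insert _ _
          · have := hH a h'.1
            rwa [poolNames_insert] at this ⊢
    | seaV B P E x ts α bs hα hx hlen hnd hfresh =>
        obtain ⟨hA, hD, hF, hW, hE, hH⟩ := hI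
        have hPsub : P ⊆ insert (⟨α, .var x, ts⟩ : Job) P := Set.subset_insert _ _
        have hjold := hW _ (Set.mem_insert _ _)
        refine ⟨(apx_plug (apx_mkHoles x bs) B).1 hA, ?_, (newJobs_finite ts bs).union (hF.subset hPsub), ?_, hE, ?_⟩
        · -- distinct names
          intro a ha b hb he
          rcases (Set.mem_union _ _ _).1 ha with ha' | ha' <;> rcases (Set.mem_union _ _ _).1 hb with hb' | hb'
          · obtain ⟨p, hp, rfl⟩ := ha'
            obtain ⟨q, hq, rfl⟩ := hb'
            simp only at he
            rw [zip_snd_inj ts bs hnd p hp q hq he]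
          · exfalso
            obtain ⟨p, hp, rfl⟩ := ha'
            obtain ⟨p1, p2⟩ := p
            have hmem : p2 ∈ bs := (List.of_mem_zip hp).2
            apply (hfresh p2 hmem).2.1
            rw [show p2 = (⟨p2, p1, []⟩ : Job).name from rfl, he]
            exact Set.mem_image_of_mem _ hb'
          · exfalso
            obtain ⟨q, hq, rfl⟩ := hb'
            obtain ⟨q1, q2⟩ := q
            have hmem : q2 ∈ bs := (List.of_mem_zip hq).2
            apply (hfresh q2 hmem).2.1
            rw [show q2 = (⟨q2, q1, []⟩ : Job).name from rfl, ← he]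
            exact Set.mem_image_of_mem _ ha'
          · exact distinct_mono hPsub hD a ha' b hb' he
        · intro j hj
          rcases (Set.mem_union _ _ _).1 hj with hj' | hj'
          · obtain ⟨p, hp, rfl⟩ := hj'
            exact ⟨hjold.2 p.1 (List.of_mem_zip hp).1, by intro u hu; simp at hu⟩
          · exact hW j (hPsub hj')
        · intro a ha
          rcases Tm.mem_holes_plug ha with h' | h'
          · rw [holes_mkHoles] at h'
            obtain ⟨t', ht'⟩ := mem_zip_right ts bs hlen a h'
            refine ⟨⟨a, t', []⟩, Set.mem_union_left _ ?_, rfl⟩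
            simp only [newJobs, Set.mem_setOf_eq]
            exact ⟨(t', a), ht', rfl⟩
          · have := hH a h'.1
            rw [poolNames_insert] at this
            rcases Set.mem_insert_iff.1 this with h'' | h''
            · exact absurd h'' h'.2
            · obtain ⟨k, hk, hk'⟩ := h''
              exact ⟨k, Set.mem_union_right _ hk, hk'⟩
  · cases h with
    | beta B P E x t u S α hα =>
        obtain ⟨hA, hD, hF, hW, hE, hH⟩ := hI
        have hPsub : P ⊆ insert (⟨α, .lam x t, u :: S⟩ : Job) P := Set.subset_insert _ _
        have hjold := hW _ (Set.mem_insert _ _)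
        refine ⟨hA, distinct_insert hα (distinct_mono hPsub hD), (hF.subset hPsub).insert _, ?_, ?_, ?_⟩
        · intro j hj
          rcases Set.mem_insert_iff.1 hj with rfl | hj
          · exact ⟨hjold.1, fun v hv => hjold.2 v (List.mem_cons_of_mem _ hv)⟩
          · exact hW j (hPsub hj)
        · intro p hp
          rcases List.mem_cons.1 hp with rfl | hp
          · exact hjold.2 u (List.mem_cons_self)
          · exact hE p hp
        · intro a ha
          have := hH a ha
          rwa [poolNames_insert] at this ⊢

theorem reachable_inv {s : State} (h : Reachable s) : InvS s := by
  obtain ⟨t, s0, hinit, hsteps⟩ := h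
  induction hsteps with
  | refl => exact init_inv hinit
  | tail _ hstep ih => exact preservation hstep ih

theorem state_vars_finite (s : State) (hfin : s.pool.Finite) : s.vars.Finite := by
  have h1 : ({v | v ∈ s.apx.allVars} : Set ℕ).Finite := List.finite_toSet _
  have h2 : (⋃ j ∈ s.pool, j.vars).Finite := by
    apply hfin.biUnion
    intro j _
    apply Set.Finite.subset (List.finite_toSet (j.tm.allVars ++ j.stk.flatMap Tm.allVars))
    intro v hv
    rcases hv with h | ⟨t, ht, h⟩
    · simp only [Set.mem_setOf_eq, List.mem_append]; exact Or.inl h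
    · simp only [Set.mem_setOf_eq, List.mem_append, List.mem_flatMap]
      exact Or.inr ⟨t, ht, h⟩
  have h3 : s.env.vars.Finite := by
    apply Set.Finite.subset (List.finite_toSet (s.env.flatMap fun p => p.1 :: p.2.allVars))
    rintro v ⟨p, hp, hv⟩
    simp only [Set.mem_setOf_eq, List.mem_flatMap]
    refine ⟨p, hp, ?_⟩
    rcases hv with rfl | hv
    · exact List.mem_cons_self
    · exact List.mem_cons_of_mem _ hv
  exact (h1.union h2).union h3

theorem progress (s : State) (hInv : InvS s) (j : Job) (hj : j ∈ s.pool) :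
    ∃ s', MStep s s' := by
  obtain ⟨hApx, hDis, hFin, hWf, hEnv, hHoles⟩ := hInv
  obtain ⟨B, P0, E⟩ := s
  obtain ⟨α, tm, stk⟩ := j
  have hpool : P0 = insert (⟨α, tm, stk⟩ : Job) (P0 \ {(⟨α, tm, stk⟩ : Job)}) := by
    rw [Set.insert_diff_singleton, Set.insert_eq_self.2 hj]
  set P := P0 \ {(⟨α, tm, stk⟩ : Job)} with hPdef
  have hα : α ∉ poolNames P := by
    rintro ⟨k, hk, hkname⟩
    have : k = ⟨α, tm, stk⟩ := hDis k hk.1 ⟨α, tm, stk⟩ hj hkname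
    exact hk.2 (by rw [this]; rfl)
  have hwfj : Job.Wf ⟨α, tm, stk⟩ := hWf _ hj
  have hFinP : P.Finite := by
    rw [hPdef]; exact hFin.subset (Set.diff_subset)
  clear hPdef
  clear_value P
  rw [hpool]
  clear hpool hj hDis hWf hFin hHoles hApx
  cases tm with
  | hole a =>
      exfalso
      have := hwfj.1
      simp [Tm.NoHole, Tm.holes] at this
  | app t u =>
      exact ⟨_, Or.inl (OStep.seaApp B P E t u stk α hα)⟩
  | lam x t =>
      cases stk with
      | nil => exact ⟨_, Or.inl (OStep.seaLam B P E x t α hα)⟩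
      | cons u S => exact ⟨_, Or.inr (BStep.beta B P E x t u S α hα)⟩
  | var x =>
      cases hx : Env.lookup E x with
      | some t =>
          have hsfin : (State.vars ⟨B, insert (⟨α, Tm.var x, stk⟩ : Job) P, E⟩).Finite :=
            state_vars_finite _ (hFinP.insert _)
          obtain ⟨N, hN⟩ := hsfin.bddAbove
          have hspec := Tm.fr_spec t.size t le_rfl (N+1)
          refine ⟨_, Or.inl (OStep.sub B P E x stk α t (Tm.fr (N+1) t).1 hα hx ?_)⟩
          refine ⟨?_, hspec.2.2.1, ?_⟩
          · apply Tm.alpha_fr t.size t le_rfl (N+1)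
            intro v hv
            have hvmem : v ∈ State.vars ⟨B, insert (⟨α, Tm.var x, stk⟩ : Job) P, E⟩ :=
              Set.mem_union_right _ ⟨(x, t), lookup_mem hx, Or.inr hv⟩
            have := hN hvmem
            omega
          · intro v hvb hvs
            have h1 := (hspec.2.1 v hvb).1
            have h2 := hN hvs
            omega
      | none =>
          obtain ⟨N2, hN2⟩ := (hFinP.image Job.name).bddAbove
          set M := max (Tm.freshVar B.holes) (max (N2 + 1) (α + 1)) with hM
          have hm1 : Tm.freshVar B.holes ≤ M := le_max_left _ _
          have hm2 : N2 + 1 ≤ M := le_trans (le_max_left _ _) (le_max_right _ _)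
          have hm3 : α + 1 ≤ M := le_trans (le_max_right _ _) (le_max_right _ _)
          refine ⟨_, Or.inl (OStep.seaV B P E x stk α (List.range' M stk.length) hα hx
            List.length_range' List.nodup_range' ?_)⟩
          intro b hb
          have hMb : M ≤ b := (List.mem_range'_1.1 hb).1
          refine ⟨?_, ?_, ?_⟩
          · intro hc
            have := Tm.le_freshVar hc
            omega
          · intro hc
            have := hN2 hc
            omega
          · omega

/-- characterization of final states of the Set EXAM. -/
theorem final_states_characterization (s : State) (h : Reachable s)
    (hfin : ∀ s', ¬ MStep s s') :
    ∃ (f : Tm) (E : Env), f.NoHole ∧ (∀ u, ¬ Beta f u) ∧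
      s = ⟨f, ∅, E⟩ ∧ s.rb = f ∧
      (∀ s', StateEq s s' → (∀ s'', ¬ MStep s' s'') ∧ s'.rb = f) := by
  have hInv : InvS s := reachable_inv h
  have hempty : s.pool = ∅ := by
    by_contra hne
    obtain ⟨j, hj⟩ := Set.nonempty_iff_ne_empty.2 hne
    obtain ⟨s', hs'⟩ := progress s hInv j hj
    exact hfin s' hs'
  have hnh : s.apx.NoHole := by
    have hH := hInv.2.2.2.2.2
    rw [hempty] at hH
    refine List.eq_nil_iff_forall_not_mem.2 ?_
    intro a ha
    obtain ⟨k, hk, _⟩ := hH a ha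
    exact hk
  refine ⟨s.apx, s.env, hnh, apx_no_beta hInv.1, ?_, ?_, ?_⟩
  · cases s with
    | mk B P E =>
        simp only at hempty ⊢
        rw [hempty]
  · exact Tm.noHole_plugAll _ hnh
  · rintro s' ⟨ha, hp, _⟩
    constructor
    · intro s'' hstep
      have hne := mstep_pool_nonempty hstep
      rw [← hp, hempty] at hne
      exact Set.not_nonempty_empty hne
    · exact (Tm.noHole_plugAll _ (ha ▸ hnh)).trans ha.symm
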